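/- Let Θ ⊆ Δ and let I be a Θ-ideal in Φ⁺. Then a(I)_Θ = a(I) ∩ R^{W_Θ}; that is, an element f of the invariant ring R^{W_Θ} can be written as f = ψ(Q) for some ψ ∈ D(A_I) if and only if it can be written as f = ψ'(Q) for some W_Θ-invariant derivation ψ' ∈ D(A_I)^{W_Θ}. -/

import Mathlib

/-!
The inclusion `⊆` holds because `Q` is `W`-invariant, so `w (ψ Q) = (w • ψ) Q`. Conversely, if
`ψ ∈ D(A_I)` and `ψ Q` is `W_Θ`-invariant, the average `ψ'` of `w • ψ` over the finite group
`W_Θ` is `W_Θ`-invariant with `ψ' Q = ψ Q`. It remains in `D(A_I)` because `W_Θ` maps `I` into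
`I ∪ -I`: for `δ ∈ Θ` and `α ∈ I ∖ {δ}`, the `δ`-string from `α` to `s_δ α` is unbroken and
consists of positive roots, so it stays inside `I`, going down by the lower ideal property or up
by the upper ideal property with respect to `Θ`.
-/

open scoped Classical

noncomputable section

variable (V : Type) [AddCommGroup V] [Module ℚ V]

/-- A finite reduced crystallographic root system `Φ` spanning the `ℚ`-vector space `V`,
together with a fixed system of positive roots `Pos`, the corresponding set of simple
roots `Δ`, the coroots `coroot α` (so that the reflection associated to `α` is
`x ↦ x - coroot α x • α`), and `coeff α δ`, the (unique, by linear independence of `Δ`)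
nonnegative integral coefficient of the simple root `δ` in the expression of the
positive root `α` as a combination of simple roots. -/
structure RootSystemData where
  Φ : Finset V
  Pos : Finset V
  Δ : Finset V
  coeff : V → V → ℕ
  coroot : V → V →ₗ[ℚ] ℚ
  span_eq_top : Submodule.span ℚ (Φ : Set V) = ⊤
  root_ne_zero : ∀ α ∈ Φ, α ≠ (0 : V)
  reduced : ∀ α ∈ Φ, ∀ c : ℚ, c • α ∈ Φ → c = 1 ∨ c = -1
  coroot_self : ∀ α ∈ Φ, coroot α α = 2
  reflect_mem : ∀ α ∈ Φ, ∀ β ∈ Φ, β - coroot α β • α ∈ Φ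
  crystallographic : ∀ α ∈ Φ, ∀ β ∈ Φ, ∃ n : ℤ, coroot α β = (n : ℚ)
  pos_subset : Pos ⊆ Φ
  pos_or_neg : ∀ α ∈ Φ, α ∈ Pos ∨ -α ∈ Pos
  pos_not_neg : ∀ α ∈ Pos, -α ∉ Pos
  simple_subset : Δ ⊆ Pos
  simple_indep : LinearIndependent ℚ (fun δ : (Δ : Set V) => (δ : V))
  pos_combo : ∀ α ∈ Pos, α = ∑ δ ∈ Δ, (coeff α δ : ℚ) • δ

variable {V}

/-- `I` is a lower ideal in the set `Pos` of positive roots. -/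
def IsLowerIdealOf (Pos I : Finset V) : Prop :=
  I ⊆ Pos ∧ ∀ α ∈ I, ∀ β ∈ Pos, α - β ∈ Pos → α - β ∈ I

/-- `Φ⁺_Θ`: the positive roots that are `ℤ`-linear combinations of roots in `Θ`. -/
def posThetaOf (Pos Θ : Finset V) : Finset V :=
  Pos.filter fun α => ∃ c : V → ℤ, α = ∑ δ ∈ Θ, (c δ : ℚ) • δ

/-- `I` is an upper ideal with respect to `Θ`. -/
def IsUpperIdealWrt (Pos Θ I : Finset V) : Prop :=
  ∀ α ∈ I, ∀ β ∈ posThetaOf Pos Θ, α + β ∈ Pos → α + β ∈ I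

/-- `I` is a `Θ`-ideal. -/
def IsThetaIdealOf (Pos Θ I : Finset V) : Prop :=
  IsLowerIdealOf Pos I ∧ IsUpperIdealWrt Pos Θ I ∧ posThetaOf Pos Θ ⊆ I

/-- The partial order `α ≼_Θ β`: `β - α` is a (possibly empty) sum of
positive roots belonging to `Φ⁺_Θ`. -/
def leTheta (Pos Θ : Finset V) (α β : V) : Prop :=
  ∃ m : Multiset V, (∀ γ ∈ m, γ ∈ posThetaOf Pos Θ) ∧ β - α = m.sum

/-- `Y` is a Weyl type subset of the lower ideal `I`. -/
def IsWeylType (I Y : Finset V) : Prop :=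
  Y ⊆ I ∧ (∀ α ∈ Y, ∀ β ∈ Y, α + β ∈ I → α + β ∈ Y) ∧
    ∀ γ ∈ I, ∀ δ ∈ I, γ ∉ Y → δ ∉ Y → γ + δ ∈ I → γ + δ ∉ Y

/-- `g` is the reflection `s_α` associated to the root `α`. -/
def IsReflectionOf (D : RootSystemData V) (α : V) (g : V ≃ₗ[ℚ] V) : Prop :=
  ∀ x, g x = x - D.coroot α x • α

/-- The Weyl group `W`, generated by the reflections `s_α` for `α ∈ Φ`. -/
def WeylGroup (D : RootSystemData V) : Subgroup (V ≃ₗ[ℚ] V) :=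
  Subgroup.closure {g | ∃ α ∈ D.Φ, IsReflectionOf D α g}

/-- The parabolic subgroup `W_Θ` generated by the reflections `s_α` for `α ∈ Θ`. -/
def WThetaGroup (D : RootSystemData V) (Θ : Finset V) : Subgroup (V ≃ₗ[ℚ] V) :=
  Subgroup.closure {g | ∃ α ∈ Θ, IsReflectionOf D α g}

/-- The length `ℓ(w)`: the smallest number of simple reflections needed to write `w`. -/
noncomputable def len (D : RootSystemData V) (w : V ≃ₗ[ℚ] V) : ℕ :=
  sInf {p : ℕ | ∃ l : List (V ≃ₗ[ℚ] V), l.length = p ∧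
    (∀ g ∈ l, ∃ α ∈ D.Δ, IsReflectionOf D α g) ∧ l.prod = w}

/-- `N(w) = {α ∈ Φ⁺ : w(α) ∈ Φ⁻}` (where `Φ⁻ = -Φ⁺`). -/
def negSet (D : RootSystemData V) (w : V ≃ₗ[ℚ] V) : Finset V :=
  D.Pos.filter fun α => -(w α) ∈ D.Pos

/-- `W^Θ`, the set of minimal length left coset representatives:
`{w ∈ W : ℓ(w) < ℓ(w s_α) for all α ∈ Θ}`. -/
def minCosetReps (D : RootSystemData V) (Θ : Finset V) : Set (V ≃ₗ[ℚ] V) :=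
  {w | w ∈ WeylGroup D ∧ ∀ g : V ≃ₗ[ℚ] V,
    (∃ α ∈ Θ, IsReflectionOf D α g) → len D w < len D (w * g)}

/-- The height `ht(α)` of a positive root: the sum of its coefficients over the simple roots. -/
def rootHt (D : RootSystemData V) (α : V) : ℕ := ∑ δ ∈ D.Δ, D.coeff α δ


variable {V : Type} [AddCommGroup V] [Module ℚ V] {κ : Type}

/-- The embedding of `V` as the degree-one part of the symmetric algebra
`R = Sym(V)`, realized as the polynomial ring `ℚ[X_i : i ∈ κ]` on a basis of `V`. -/
noncomputable def embR (bV : Module.Basis κ ℚ V) : V →ₗ[ℚ] MvPolynomial κ ℚ :=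
  (Finsupp.linearCombination ℚ (MvPolynomial.X : κ → MvPolynomial κ ℚ)).comp
    bV.repr.toLinearMap

/-- The algebra endomorphism of `R = Sym(V)` extending a linear automorphism `w` of `V`. -/
noncomputable def liftW (bV : Module.Basis κ ℚ V) (w : V ≃ₗ[ℚ] V) :
    MvPolynomial κ ℚ →ₐ[ℚ] MvPolynomial κ ℚ :=
  MvPolynomial.aeval fun i => embR bV (w (bV i))

/-- `ψ : R → R` is a `ℚ`-linear derivation of `R`. -/
def IsDerivFn (ψ : MvPolynomial κ ℚ → MvPolynomial κ ℚ) : Prop :=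
  IsLinearMap ℚ ψ ∧ ∀ f g, ψ (f * g) = ψ f * g + f * ψ g

/-- `ψ` belongs to the logarithmic derivation module `D(A_I)` of the ideal
arrangement `A_I`: it is a derivation of `R` with `ψ(α) ∈ Rα` for all `α ∈ I`. -/
def InLogDer (bV : Module.Basis κ ℚ V) (I : Finset V)
    (ψ : MvPolynomial κ ℚ → MvPolynomial κ ℚ) : Prop :=
  IsDerivFn ψ ∧ ∀ α ∈ I, ∃ r : MvPolynomial κ ℚ, ψ (embR bV α) = r * embR bV α

/-- The action of `w` on derivations: `(w·ψ)(f) = w(ψ(w⁻¹ f))`. -/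
noncomputable def actDer (bV : Module.Basis κ ℚ V) (w : V ≃ₗ[ℚ] V)
    (ψ : MvPolynomial κ ℚ → MvPolynomial κ ℚ) :
    MvPolynomial κ ℚ → MvPolynomial κ ℚ :=
  fun f => liftW bV w (ψ (liftW bV w⁻¹ f))

/-- The quadratic form on `V` associated to a polynomial `Q ∈ R`, by evaluation in the
coordinates of the given basis. -/
noncomputable def polyQuadForm (bV : Module.Basis κ ℚ V) (Q : MvPolynomial κ ℚ) (v : V) : ℚ :=
  MvPolynomial.eval (fun i => bV.repr v i) Q

/-- The symmetric bilinear form associated to the quadratic form of `Q` is nondegenerate. -/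
def NondegQuad (bV : Module.Basis κ ℚ V) (Q : MvPolynomial κ ℚ) : Prop :=
  ∀ v : V, (∀ u : V,
    polyQuadForm bV Q (v + u) - polyQuadForm bV Q v - polyQuadForm bV Q u = 0) → v = 0

open scoped Pointwise

lemma IsLowerIdealOf.sub_nsmul_mem {M : Type} [AddCommGroup M] {Pos I : Finset M}
    (hI : IsLowerIdealOf Pos I) {α δ : M} (hα : α ∈ I) (hδ : δ ∈ Pos) {n : ℕ}
    (h : ∀ k ≤ n, α - k • δ ∈ Pos) : α - n • δ ∈ I := by
  induction n with
  | zero => simpa using hα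
  | succ n ih =>
    have hn := h (n + 1) le_rfl
    rw [succ_nsmul, ← sub_sub] at hn ⊢
    exact hI.2 _ (ih fun k hk => h k (by omega)) δ hδ hn

lemma IsUpperIdealWrt.add_nsmul_mem {Pos Θ I : Finset V} (hI : IsUpperIdealWrt Pos Θ I)
    {α δ : V} (hα : α ∈ I) (hδ : δ ∈ posThetaOf Pos Θ) {n : ℕ}
    (h : ∀ k ≤ n, α + k • δ ∈ Pos) : α + n • δ ∈ I := by
  induction n with
  | zero => simpa using hα
  | succ n ih =>
    have hn := h (n + 1) le_rfl
    rw [succ_nsmul, ← add_assoc] at hn ⊢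
    exact hI _ (ih fun k hk => h k (by omega)) δ hδ hn

lemma mem_posThetaOf_of_mem {Pos Θ : Finset V} {δ : V} (hδ : δ ∈ Θ) (hpos : δ ∈ Pos) :
    δ ∈ posThetaOf Pos Θ :=
  Finset.mem_filter.mpr ⟨hpos, fun v => if v = δ then 1 else 0, by simp [ite_smul, hδ]⟩

lemma LinearEquiv.finite_stabilizer_of_span_eq_top {K M : Type*} [Field K] [AddCommGroup M]
    [Module K M] {S : Set M} (hfin : S.Finite) (hspan : Submodule.span K S = ⊤) :
    Finite (MulAction.stabilizer (M ≃ₗ[K] M) S) := by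
  have : Finite S := hfin
  have hmaps (g : MulAction.stabilizer (M ≃ₗ[K] M) S) (x : S) : (g : M ≃ₗ[K] M) x ∈ S :=
    (MulAction.mem_stabilizer_set' hfin).mp g.2 x.2
  refine Finite.of_injective (fun g (x : S) => (⟨_, hmaps g x⟩ : S)) fun g h hgh => ?_
  have heq : ((g : M ≃ₗ[K] M) : M →ₗ[K] M) = (h : M ≃ₗ[K] M) :=
    LinearMap.ext_on hspan fun x hx => congrArg Subtype.val (congrFun hgh ⟨x, hx⟩)
  exact Subtype.ext (LinearEquiv.toLinearMap_injective heq)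

namespace RootSystemData

lemma finiteDimensional (D : RootSystemData V) : FiniteDimensional ℚ V := by
  have : FiniteDimensional ℚ (Submodule.span ℚ (D.Φ : Set V)) :=
    FiniteDimensional.span_of_finite ℚ D.Φ.finite_toSet
  exact Module.Finite.equiv (LinearEquiv.ofTop _ D.span_eq_top)

variable (D : RootSystemData V)

/-- Composing the reflections of two roots with the same coroot `f` gives the transvection
`x ↦ x + f x • (β - α)`, whose powers would produce infinitely many roots unless `α = β`. -/
lemma coroot_injOn : Set.InjOn D.coroot D.Φ := by
  intro α hα β hβ hf
  have hα2 := D.coroot_self α hα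
  have hβ2 : D.coroot α β = 2 := by rw [hf]; exact D.coroot_self β hβ
  have hmem (n : ℕ) : α + ((2 * n : ℕ) : ℚ) • (β - α) ∈ D.Φ := by
    induction n with
    | zero => simpa using hα
    | succ n ih =>
      set x := α + ((2 * n : ℕ) : ℚ) • (β - α)
      have hx : D.coroot α x = 2 := by
        simp only [x, map_add, map_smul, map_sub, hα2, hβ2, sub_self, smul_zero, add_zero]
      have h := D.reflect_mem β hβ _ (D.reflect_mem α hα x ih)
      rw [hx, ← hf, map_sub, hx, map_smul, hα2] at h
      convert h using 1
      simp only [x]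
      push_cast
      module
  by_contra hne
  refine Set.infinite_of_injective_forall_mem (fun m n hmn => ?_) hmem D.Φ.finite_toSet
  simpa using smul_left_injective ℚ (sub_ne_zero.mpr (Ne.symm hne)) (add_left_cancel hmn)

def toRootPairing [FiniteDimensional ℚ V] : RootPairing D.Φ ℚ V (Module.Dual ℚ V) :=
  RootPairing.mk'' (Module.Dual.eval ℚ V) (Function.Embedding.subtype _)
    ⟨fun α => D.coroot α, fun α β h => Subtype.ext (D.coroot_injOn α.2 β.2 h)⟩
    (fun α => D.coroot_self α α.2)
    (by
      rintro α - ⟨β, rfl⟩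
      exact ⟨⟨_, D.reflect_mem α α.2 β β.2⟩, rfl⟩)
    (by simpa using D.span_eq_top)

section RootStrings

variable [FiniteDimensional ℚ V]

@[simp]
lemma toRootPairing_root (α : D.Φ) : D.toRootPairing.root α = α := rfl

instance : D.toRootPairing.IsCrystallographic :=
  ⟨fun α β => (D.crystallographic β β.2 α α.2).imp fun _ h => h.symm⟩

lemma mem_of_mem_range_root {x : V} (h : x ∈ Set.range D.toRootPairing.root) : x ∈ D.Φ := by
  obtain ⟨α, rfl⟩ := h
  exact α.2

variable {D} {α δ : V}

lemma linearIndependent_toRootPairing_root (hα : α ∈ D.Φ) (hδ : δ ∈ D.Φ)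
    (hli : LinearIndependent ℚ ![δ, α]) :
    LinearIndependent ℚ ![D.toRootPairing.root ⟨δ, hδ⟩, D.toRootPairing.root ⟨α, hα⟩] := by
  simpa using hli

lemma chainBotCoeff_sub_chainTopCoeff_toRootPairing (hα : α ∈ D.Φ) (hδ : δ ∈ D.Φ)
    (hli : LinearIndependent ℚ ![δ, α]) {m : ℤ} (hm : D.coroot δ α = m) :
    (D.toRootPairing.chainBotCoeff ⟨δ, hδ⟩ ⟨α, hα⟩ : ℤ)
      - D.toRootPairing.chainTopCoeff ⟨δ, hδ⟩ ⟨α, hα⟩ = m := by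
  rw [RootPairing.chainBotCoeff_sub_chainTopCoeff
    (linearIndependent_toRootPairing_root hα hδ hli)]
  have h := (D.toRootPairing.algebraMap_pairingIn ℤ ⟨α, hα⟩ ⟨δ, hδ⟩).trans hm
  rw [algebraMap_int_eq, eq_intCast] at h
  exact_mod_cast h

lemma sub_nsmul_mem_of_coroot_eq_natCast (hα : α ∈ D.Φ) (hδ : δ ∈ D.Φ)
    (hli : LinearIndependent ℚ ![δ, α]) {n : ℕ} (hn : D.coroot δ α = n) {k : ℕ}
    (hk : k ≤ n) : α - k • δ ∈ D.Φ := by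
  have := chainBotCoeff_sub_chainTopCoeff_toRootPairing hα hδ hli (m := n)
    (by exact_mod_cast hn)
  exact mem_of_mem_range_root D <| (RootPairing.root_sub_nsmul_mem_range_iff_le_chainBotCoeff
    (linearIndependent_toRootPairing_root hα hδ hli)).mpr (by omega)

lemma add_nsmul_mem_of_coroot_eq_neg_natCast (hα : α ∈ D.Φ) (hδ : δ ∈ D.Φ)
    (hli : LinearIndependent ℚ ![δ, α]) {n : ℕ} (hn : D.coroot δ α = -n) {k : ℕ}
    (hk : k ≤ n) : α + k • δ ∈ D.Φ := by
  have := chainBotCoeff_sub_chainTopCoeff_toRootPairing hα hδ hli (m := -n)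
    (by exact_mod_cast hn)
  exact mem_of_mem_range_root D <| (RootPairing.root_add_nsmul_mem_range_iff_le_chainTopCoeff
    (linearIndependent_toRootPairing_root hα hδ hli)).mpr (by omega)

end RootStrings

lemma eq_of_eq_smul {α δ : V} (hα : α ∈ D.Pos) (hδ : δ ∈ D.Pos) {c : ℚ} (h : α = c • δ) :
    α = δ := by
  rcases D.reduced δ (D.pos_subset hδ) c (h ▸ D.pos_subset hα) with rfl | rfl
  · simpa using h
  · exact absurd (by simpa [h] using hα) (D.pos_not_neg δ hδ)

lemma linearIndependent_pair {α δ : V} (hα : α ∈ D.Pos) (hδ : δ ∈ D.Pos) (hne : α ≠ δ) :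
    LinearIndependent ℚ ![δ, α] :=
  (LinearIndependent.pair_iff' (D.root_ne_zero δ (D.pos_subset hδ))).mpr
    fun _ h => hne (D.eq_of_eq_smul hα hδ h.symm)

/-- A positive root `α ≠ δ` has a positive coefficient at some simple root other than `δ`,
and adding multiples of `δ` does not change that coefficient. -/
lemma add_smul_mem_pos {α δ : V} (hα : α ∈ D.Pos) (hδ : δ ∈ D.Δ) (hne : α ≠ δ) {t : ℚ}
    (h : α + t • δ ∈ D.Φ) : α + t • δ ∈ D.Pos := by
  refine (D.pos_or_neg _ h).resolve_right fun hneg => ?_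
  set β := -(α + t • δ)
  have hsum : ∑ γ ∈ D.Δ, (((D.coeff α γ : ℚ) + D.coeff β γ) + if γ = δ then t else 0) • γ
      = 0 := by
    simp only [add_smul, Finset.sum_add_distrib, ite_smul, zero_smul, Finset.sum_ite_eq',
      if_pos hδ, ← D.pos_combo α hα, ← D.pos_combo β hneg, β]
    abel
  have hcoeff := (linearIndepOn_finset_iff (v := id)).mp D.simple_indep _ hsum
  have hα' : α = (D.coeff α δ : ℚ) • δ := by
    conv_lhs => rw [D.pos_combo α hα]
    refine Finset.sum_eq_single δ (fun γ hγ hγδ => ?_) (absurd hδ)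
    have h0 := hcoeff γ hγ
    rw [if_neg hγδ, add_zero] at h0
    have : D.coeff α γ + D.coeff β γ = 0 := by exact_mod_cast h0
    rw [(Nat.add_eq_zero_iff.mp this).1, Nat.cast_zero, zero_smul]
  exact hne (D.eq_of_eq_smul hα (D.simple_subset hδ) hα')

variable {D} in
lemma reflect_mem_or_neg_mem_of_isLowerIdealOf [FiniteDimensional ℚ V] {Θ I : Finset V}
    (hΘ : Θ ⊆ D.Δ) (hlow : IsLowerIdealOf D.Pos I) (hup : IsUpperIdealWrt D.Pos Θ I) {δ α : V}
    (hδ : δ ∈ Θ) (hα : α ∈ I) : α - D.coroot δ α • δ ∈ I ∨ -(α - D.coroot δ α • δ) ∈ I := by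
  have hδΔ := hΘ hδ
  have hδPos := D.simple_subset hδΔ
  have hδΦ := D.pos_subset hδPos
  have hαPos := hlow.1 hα
  have hαΦ := D.pos_subset hαPos
  by_cases hαδ : α = δ
  · subst hαδ
    right
    rwa [D.coroot_self α hαΦ, two_smul, sub_add_cancel_left, neg_neg]
  left
  have hli := D.linearIndependent_pair hαPos hδPos hαδ
  have hpos (t : ℚ) (h : α + t • δ ∈ D.Φ) := D.add_smul_mem_pos hαPos hδΔ hαδ h
  obtain ⟨m, hm⟩ := D.crystallographic δ hδΦ α hαΦ
  obtain ⟨n, rfl | rfl⟩ := m.eq_nat_or_neg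
  · have hstring : ∀ k ≤ n, α - k • δ ∈ D.Pos := fun k hk => by
      have h := sub_nsmul_mem_of_coroot_eq_natCast hαΦ hδΦ hli (by exact_mod_cast hm) hk
      rw [sub_eq_add_neg, ← Nat.cast_smul_eq_nsmul ℚ, ← neg_smul] at h ⊢
      exact hpos _ h
    rw [hm, Int.cast_natCast, Nat.cast_smul_eq_nsmul]
    exact hlow.sub_nsmul_mem hα hδPos hstring
  · have hstring : ∀ k ≤ n, α + k • δ ∈ D.Pos := fun k hk => by
      have h := add_nsmul_mem_of_coroot_eq_neg_natCast hαΦ hδΦ hli (by exact_mod_cast hm) hk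
      rw [← Nat.cast_smul_eq_nsmul ℚ] at h ⊢
      exact hpos _ h
    rw [hm, Int.cast_neg, Int.cast_natCast, neg_smul, sub_neg_eq_add, Nat.cast_smul_eq_nsmul]
    exact hup.add_nsmul_mem hα (mem_posThetaOf_of_mem hδ hδPos) hstring

lemma weylGroup_le_stabilizer : WeylGroup D ≤ MulAction.stabilizer (V ≃ₗ[ℚ] V) (D.Φ : Set V) :=
  (Subgroup.closure_le _).mpr fun g ⟨α, hα, hg⟩ =>
    (MulAction.mem_stabilizer_set' D.Φ.finite_toSet).mpr fun β hβ => by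
      rw [LinearEquiv.smul_def, hg]
      exact D.reflect_mem α hα β hβ

lemma finite_weylGroup : Finite (WeylGroup D) :=
  have := LinearEquiv.finite_stabilizer_of_span_eq_top D.Φ.finite_toSet D.span_eq_top
  Finite.of_injective _ (Subgroup.inclusion_injective D.weylGroup_le_stabilizer)

lemma wThetaGroup_le_weylGroup {Θ : Finset V} (hΘ : Θ ⊆ D.Δ) : WThetaGroup D Θ ≤ WeylGroup D :=
  Subgroup.closure_mono fun _ ⟨δ, hδ, hg⟩ => ⟨δ, D.pos_subset (D.simple_subset (hΘ hδ)), hg⟩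

lemma wThetaGroup_le_stabilizer [FiniteDimensional ℚ V] {Θ I : Finset V} (hΘ : Θ ⊆ D.Δ)
    (hlow : IsLowerIdealOf D.Pos I) (hup : IsUpperIdealWrt D.Pos Θ I) :
    WThetaGroup D Θ ≤ MulAction.stabilizer (V ≃ₗ[ℚ] V) ((I ∪ -I : Finset V) : Set V) := by
  refine (Subgroup.closure_le _).mpr fun g ⟨δ, hδ, hg⟩ =>
    (MulAction.mem_stabilizer_set' (Finset.finite_toSet _)).mpr fun x hx => ?_
  simp only [Finset.coe_union, Set.mem_union, Finset.mem_coe, Finset.mem_neg',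
    LinearEquiv.smul_def] at hx ⊢
  rw [hg]
  rcases hx with hx | hx
  · exact reflect_mem_or_neg_mem_of_isLowerIdealOf hΘ hlow hup hδ hx
  · have h := reflect_mem_or_neg_mem_of_isLowerIdealOf hΘ hlow hup hδ hx
    have hneg : -x - D.coroot δ (-x) • δ = -(x - D.coroot δ x • δ) := by
      rw [map_neg]
      module
    rwa [hneg, neg_neg, or_comm] at h

end RootSystemData

section Derivations

variable (bV : Module.Basis κ ℚ V)

lemma embR_basis (i : κ) : embR bV (bV i) = MvPolynomial.X i := by
  simp [embR]

lemma liftW_X (w : V ≃ₗ[ℚ] V) (i : κ) :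
    liftW bV w (MvPolynomial.X i) = embR bV (w (bV i)) :=
  MvPolynomial.aeval_X _ _

lemma liftW_embR (w : V ≃ₗ[ℚ] V) (v : V) : liftW bV w (embR bV v) = embR bV (w v) := by
  have h : (liftW bV w).toLinearMap ∘ₗ embR bV = embR bV ∘ₗ (w : V →ₗ[ℚ] V) :=
    bV.ext fun i => by simp [embR_basis, liftW_X]
  exact LinearMap.congr_fun h v

lemma liftW_mul (w u : V ≃ₗ[ℚ] V) : liftW bV (w * u) = (liftW bV w).comp (liftW bV u) :=
  MvPolynomial.algHom_ext fun i => by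
    rw [AlgHom.comp_apply, liftW_X, liftW_X, liftW_embR]
    rfl

lemma liftW_one : liftW bV 1 = AlgHom.id ℚ (MvPolynomial κ ℚ) :=
  MvPolynomial.algHom_ext fun i => by
    rw [liftW_X, LinearEquiv.coe_one, id_eq, embR_basis, AlgHom.id_apply]

lemma liftW_liftW_inv (w : V ≃ₗ[ℚ] V) (f : MvPolynomial κ ℚ) :
    liftW bV w (liftW bV w⁻¹ f) = f := by
  rw [← AlgHom.comp_apply, ← liftW_mul, mul_inv_cancel, liftW_one, AlgHom.id_apply]

lemma actDer_actDer (w u : V ≃ₗ[ℚ] V) (ψ : MvPolynomial κ ℚ → MvPolynomial κ ℚ) :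
    actDer bV w (actDer bV u ψ) = actDer bV (w * u) ψ := by
  funext f
  simp [actDer, liftW_mul, mul_inv_rev]

def logDerSubmodule (I : Finset V) : Submodule ℚ (MvPolynomial κ ℚ → MvPolynomial κ ℚ) where
  carrier := {ψ | InLogDer bV I ψ}
  zero_mem' := ⟨⟨⟨fun _ _ => (add_zero 0).symm, fun c _ => (smul_zero c).symm⟩,
    fun _ _ => by simp⟩, fun _ _ => ⟨0, by simp⟩⟩
  add_mem' := by
    rintro ψ φ ⟨⟨hψlin, hψ⟩, hψI⟩ ⟨⟨hφlin, hφ⟩, hφI⟩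
    refine ⟨⟨⟨fun f g => ?_, fun c f => ?_⟩, fun f g => ?_⟩, fun α hα => ?_⟩
    · simp only [Pi.add_apply, hψlin.map_add, hφlin.map_add]
      abel
    · simp only [Pi.add_apply, hψlin.map_smul, hφlin.map_smul, smul_add]
    · simp only [Pi.add_apply, hψ, hφ]
      ring
    · obtain ⟨r, hr⟩ := hψI α hα
      obtain ⟨s, hs⟩ := hφI α hα
      exact ⟨r + s, by rw [Pi.add_apply, hr, hs, add_mul]⟩
  smul_mem' := by
    rintro c ψ ⟨⟨hψlin, hψ⟩, hψI⟩
    refine ⟨⟨⟨fun f g => ?_, fun a f => ?_⟩, fun f g => ?_⟩, fun α hα => ?_⟩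
    · simp only [Pi.smul_apply, hψlin.map_add, smul_add]
    · simp only [Pi.smul_apply, hψlin.map_smul, smul_comm c a]
    · simp only [Pi.smul_apply, hψ, smul_add, smul_mul_assoc, mul_smul_comm]
    · obtain ⟨r, hr⟩ := hψI α hα
      exact ⟨c • r, by rw [Pi.smul_apply, hr, smul_mul_assoc]⟩

variable {bV}

lemma IsDerivFn.actDer {ψ : MvPolynomial κ ℚ → MvPolynomial κ ℚ} (hψ : IsDerivFn ψ)
    (w : V ≃ₗ[ℚ] V) : IsDerivFn (actDer bV w ψ) := by
  obtain ⟨hlin, hleib⟩ := hψ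
  refine ⟨⟨fun f g => ?_, fun c f => ?_⟩, fun f g => ?_⟩ <;> simp only [_root_.actDer]
  · rw [map_add, hlin.map_add, map_add]
  · rw [map_smul, hlin.map_smul, map_smul]
  · rw [map_mul, hleib, map_add, map_mul, map_mul, liftW_liftW_inv, liftW_liftW_inv]

lemma InLogDer.actDer {I : Finset V} {ψ : MvPolynomial κ ℚ → MvPolynomial κ ℚ}
    (hψ : InLogDer bV I ψ) {w : V ≃ₗ[ℚ] V} (hw : ∀ α ∈ I, w⁻¹ α ∈ I ∪ -I) :
    InLogDer bV I (actDer bV w ψ) := by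
  refine ⟨hψ.1.actDer w, fun α hα => ?_⟩
  have hdiv : ∀ β ∈ I ∪ -I, ∃ r, ψ (embR bV β) = r * embR bV β := by
    intro β hβ
    rcases Finset.mem_union.mp hβ with hβ | hβ
    · exact hψ.2 β hβ
    · obtain ⟨r, hr⟩ := hψ.2 _ (Finset.mem_neg'.mp hβ)
      refine ⟨r, ?_⟩
      rw [← neg_neg β, map_neg, hψ.1.1.map_neg, hr, map_neg, neg_neg, mul_neg, neg_neg]
  obtain ⟨r, hr⟩ := hdiv _ (hw α hα)
  refine ⟨liftW bV w r, ?_⟩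
  rw [_root_.actDer, liftW_embR, hr, map_mul, liftW_embR]
  exact congrArg _ (congrArg _ (w.apply_symm_apply α))

variable (bV)

def avgDer (G : Subgroup (V ≃ₗ[ℚ] V)) [Fintype G] (ψ : MvPolynomial κ ℚ → MvPolynomial κ ℚ) :
    MvPolynomial κ ℚ → MvPolynomial κ ℚ :=
  (Fintype.card G : ℚ)⁻¹ • ∑ w : G, actDer bV w ψ

variable {G : Subgroup (V ≃ₗ[ℚ] V)} [Fintype G] {ψ : MvPolynomial κ ℚ → MvPolynomial κ ℚ}

lemma avgDer_mem_logDerSubmodule {I : Finset V}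
    (h : ∀ w ∈ G, actDer bV w ψ ∈ logDerSubmodule bV I) :
    avgDer bV G ψ ∈ logDerSubmodule bV I :=
  Submodule.smul_mem _ _ (Submodule.sum_mem _ fun (w : G) _ => h w w.2)

lemma actDer_avgDer {u : V ≃ₗ[ℚ] V} (hu : u ∈ G) :
    actDer bV u (avgDer bV G ψ) = avgDer bV G ψ := by
  funext f
  have hsum : actDer bV u (avgDer bV G ψ) f
      = (Fintype.card G : ℚ)⁻¹ • ∑ w : G, actDer bV u (actDer bV w ψ) f := by
    simp only [avgDer, _root_.actDer, Pi.smul_apply, Finset.sum_apply, map_smul,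
      map_sum]
  rw [hsum]
  simp only [actDer_actDer, avgDer, Pi.smul_apply, Finset.sum_apply]
  exact congrArg _ (Fintype.sum_equiv (Equiv.mulLeft (⟨u, hu⟩ : G)) _ _ fun _ => rfl)

lemma avgDer_apply_of_forall {f : MvPolynomial κ ℚ} (h : ∀ w ∈ G, actDer bV w ψ f = ψ f) :
    avgDer bV G ψ f = ψ f := by
  simp only [avgDer, Pi.smul_apply, Finset.sum_apply]
  rw [Finset.sum_congr rfl fun (w : G) _ => h w w.2, Finset.sum_const, Finset.card_univ,
    ← Nat.cast_smul_eq_nsmul ℚ, inv_smul_smul₀ (Nat.cast_ne_zero.mpr Fintype.card_ne_zero)]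

end Derivations

theorem aIdealTheta_eq_aIdeal_inter_invariants_general
    (D : RootSystemData V) (bV : Module.Basis κ ℚ V)
    (Θ : Finset V) (hΘ : Θ ⊆ D.Δ)
    (I : Finset V) (hI : IsThetaIdealOf D.Pos Θ I)
    (Q : MvPolynomial κ ℚ)
    (hQW : ∀ w ∈ WeylGroup D, liftW bV w Q = Q) :
    {f : MvPolynomial κ ℚ | ∃ ψ, InLogDer bV I ψ ∧
        (∀ w ∈ WThetaGroup D Θ, actDer bV w ψ = ψ) ∧ ψ Q = f} =
      {f : MvPolynomial κ ℚ | (∃ ψ, InLogDer bV I ψ ∧ ψ Q = f) ∧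
        ∀ w ∈ WThetaGroup D Θ, liftW bV w f = f} := by
  have := D.finiteDimensional
  have := D.finite_weylGroup
  have hle := D.wThetaGroup_le_weylGroup hΘ
  have : Fintype (WThetaGroup D Θ) :=
    have := Finite.of_injective _ (Subgroup.inclusion_injective hle)
    Fintype.ofFinite _
  have hQ (ψ) (w) (hw : w ∈ WThetaGroup D Θ) : actDer bV w ψ Q = liftW bV w (ψ Q) := by
    rw [actDer, hQW _ (hle (inv_mem hw))]
  have hstab := D.wThetaGroup_le_stabilizer hΘ hI.1 hI.2.1
  ext f
  constructor
  · rintro ⟨ψ, hψ, hinv, rfl⟩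
    exact ⟨⟨ψ, hψ, rfl⟩, fun w hw => (hQ ψ w hw).symm.trans (congrFun (hinv w hw) Q)⟩
  · rintro ⟨⟨ψ, hψ, rfl⟩, hf⟩
    refine ⟨avgDer bV _ ψ, avgDer_mem_logDerSubmodule bV fun w hw => hψ.actDer fun α hα => ?_,
      fun w hw => actDer_avgDer bV hw,
      avgDer_apply_of_forall bV fun w hw => (hQ ψ w hw).trans (hf w hw)⟩
    exact (MulAction.mem_stabilizer_set' (Finset.finite_toSet _)).mp (hstab (inv_mem hw))
      (Finset.mem_coe.mpr (Finset.mem_union_left _ hα))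

/-- Let `Θ ⊆ Δ` and let `I` be a `Θ`-ideal in `Φ⁺`, and let `Q` be a
fixed `W`-invariant element of `Sym²(V) ⊂ R`. Then `a(I)_Θ = a(I) ∩ R^{W_Θ}`: an
element `f` of the invariant ring `R^{W_Θ}` can be written as `f = ψ(Q)` for some
`ψ ∈ D(A_I)` if and only if it can be written as `f = ψ'(Q)` for some `W_Θ`-invariant
derivation `ψ' ∈ D(A_I)^{W_Θ}`. -/
theorem aIdealTheta_eq_aIdeal_inter_invariants
    (D : RootSystemData V) (bV : Module.Basis κ ℚ V)
    (Θ : Finset V) (hΘ : Θ ⊆ D.Δ)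
    (I : Finset V) (hI : IsThetaIdealOf D.Pos Θ I)
    (Q : MvPolynomial κ ℚ) (hQ2 : Q.IsHomogeneous 2)
    (hQW : ∀ w ∈ WeylGroup D, liftW bV w Q = Q) :
    {f : MvPolynomial κ ℚ | ∃ ψ, InLogDer bV I ψ ∧
        (∀ w ∈ WThetaGroup D Θ, actDer bV w ψ = ψ) ∧ ψ Q = f} =
      {f : MvPolynomial κ ℚ | (∃ ψ, InLogDer bV I ψ ∧ ψ Q = f) ∧
        ∀ w ∈ WThetaGroup D Θ, liftW bV w f = f} :=
  aIdealTheta_eq_aIdeal_inter_invariants_general D bV Θ hΘ I hI Q hQW
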